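/- Let A and B be finite nonempty sets and P a probability mass function on A × B with P(x,y) > 0 for all (x,y). For ρ ∈ [0,1] define φ(ρ) = ln Σ_{y∈B} ( Σ_{x∈A} P(x,y)^{1/(1+ρ)} )^{1+ρ}, the tilted joint probability mass function P̄_ρ(x,y) = P(x,y)^{1/(1+ρ)} · ( Σ_{x'∈A} P(x',y)^{1/(1+ρ)} )^{ρ} / Σ_{y'∈B} ( Σ_{x'∈A} P(x',y')^{1/(1+ρ)} )^{1+ρ}, its conditional entropy h(ρ) = H(X̄(ρ)|Ȳ(ρ)) under P̄_ρ, and J(R) = max_{ρ∈[0,1]} { ρ·R − φ(ρ) }. If h(0) < R < h(1) (note h(0) = H(X|Y) under P, since P̄_0 = P), then there exists ρ_0 ∈ (0,1) with h(ρ_0) = R and J(R) = ρ_0·R − φ(ρ_0). -/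

import Mathlib

/-!
`ρ ↦ φ ρ` is the logarithm of the partition function `gallagerSum P ρ`, and differentiating it
gives exactly the conditional entropy of the tilted distribution: `φ' = h` on `(-1, ∞)`.
Hence `g ρ = ρ R - φ ρ` has derivative `R - h ρ`, which is positive at `0` and negative at `1`.
The maximum of `g` on `[0, 1]`, which is `J R`, can therefore be attained at neither endpoint,
so it is attained at an interior `ρ₀`, where Fermat's rule gives `h ρ₀ = R`.
-/

open Real Set Filter Topology Finset

section Calculus

variable {f : ℝ → ℝ} {a b d : ℝ}

theorem IsMaxOn.hasDerivAt_nonpos_of_left (hab : a < b) (hmax : IsMaxOn f (Icc a b) a)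
    (hf : HasDerivAt f d a) : d ≤ 0 := by
  have hslope : Tendsto (slope f a) (𝓝[>] a) (𝓝 d) :=
    (hasDerivAt_iff_tendsto_slope.1 hf).mono_left (nhdsWithin_mono _ fun _ ht => ne_of_gt ht)
  refine le_of_tendsto hslope ?_
  filter_upwards [Ioc_mem_nhdsGT hab] with t ht
  rw [slope_def_field]
  exact div_nonpos_of_nonpos_of_nonneg (sub_nonpos.2 (hmax ⟨ht.1.le, ht.2⟩))
    (sub_nonneg.2 ht.1.le)

theorem IsMaxOn.hasDerivAt_nonneg_of_right (hab : a < b) (hmax : IsMaxOn f (Icc a b) b)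
    (hf : HasDerivAt f d b) : 0 ≤ d := by
  have hslope : Tendsto (slope f b) (𝓝[<] b) (𝓝 d) :=
    (hasDerivAt_iff_tendsto_slope.1 hf).mono_left (nhdsWithin_mono _ fun _ ht => ne_of_lt ht)
  refine ge_of_tendsto hslope ?_
  filter_upwards [Ico_mem_nhdsLT hab] with t ht
  rw [slope_def_field]
  exact div_nonneg_of_nonpos (sub_nonpos.2 (hmax ⟨ht.1, ht.2.le⟩)) (sub_nonpos.2 ht.2.le)

theorem exists_mem_Ioo_isMaxOn_hasDerivAt_eq_zero {f' : ℝ → ℝ} (hab : a < b)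
    (hf : ∀ x ∈ Icc a b, HasDerivAt f (f' x) x) (ha : 0 < f' a) (hb : f' b < 0) :
    ∃ c ∈ Ioo a b, IsMaxOn f (Icc a b) c ∧ f' c = 0 := by
  obtain ⟨c, hc, hmax⟩ := isCompact_Icc.exists_isMaxOn (nonempty_Icc.2 hab.le)
    fun x hx => (hf x hx).continuousAt.continuousWithinAt
  have hca : c ≠ a := by
    rintro rfl
    exact (hmax.hasDerivAt_nonpos_of_left hab (hf c hc)).not_gt ha
  have hcb : c ≠ b := by
    rintro rfl
    exact (hmax.hasDerivAt_nonneg_of_right hab (hf c hc)).not_gt hb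
  have hc' : c ∈ Ioo a b := ⟨hc.1.lt_of_ne' hca, hc.2.lt_of_ne hcb⟩
  exact ⟨c, hc', hmax, (hmax.isLocalMax (Icc_mem_nhds hc'.1 hc'.2)).hasDerivAt_eq_zero (hf c hc)⟩

end Calculus

noncomputable section

variable {A B : Type*} [Fintype A]

def gallagerInner (P : A → B → ℝ) (ρ : ℝ) (y : B) : ℝ :=
  ∑ x, P x y ^ (1 / (1 + ρ))

variable {P : A → B → ℝ} {ρ : ℝ}

theorem gallagerInner_pos [Nonempty A] (hP : ∀ x y, 0 < P x y) (ρ : ℝ) (y : B) :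
    0 < gallagerInner P ρ y :=
  sum_pos (fun x _ => rpow_pos_of_pos (hP x y) _) univ_nonempty

theorem hasDerivAt_rpow_one_div_one_add {p : ℝ} (hp : 0 < p) (hρ : 1 + ρ ≠ 0) :
    HasDerivAt (fun t => p ^ (1 / (1 + t)))
      (-(1 / (1 + ρ)) ^ 2 * (p ^ (1 / (1 + ρ)) * log p)) ρ := by
  have hinv : HasDerivAt (fun t => 1 / (1 + t)) (-(1 / (1 + ρ)) ^ 2) ρ := by
    simpa [one_div, Pi.inv_def, div_pow, neg_div] using ((hasDerivAt_id' ρ).const_add 1).inv hρ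
  convert hinv.const_rpow hp using 1
  ring

theorem hasDerivAt_gallagerInner (hP : ∀ x y, 0 < P x y) (hρ : 1 + ρ ≠ 0) (y : B) :
    HasDerivAt (gallagerInner P · y)
      (-(1 / (1 + ρ)) ^ 2 * ∑ x, P x y ^ (1 / (1 + ρ)) * log (P x y)) ρ := by
  rw [mul_sum]
  exact HasDerivAt.fun_sum fun x _ => hasDerivAt_rpow_one_div_one_add (hP x y) hρ

theorem hasDerivAt_gallagerInner_rpow [Nonempty A] (hP : ∀ x y, 0 < P x y) (hρ : -1 < ρ)
    (y : B) :
    HasDerivAt (fun t => gallagerInner P t y ^ (1 + t))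
      (-∑ x, P x y ^ (1 / (1 + ρ)) * gallagerInner P ρ y ^ ρ *
        log (P x y ^ (1 / (1 + ρ)) / gallagerInner P ρ y)) ρ := by
  have h1ρ : 0 < 1 + ρ := by linarith
  have hα := gallagerInner_pos hP ρ y
  convert (hasDerivAt_gallagerInner hP h1ρ.ne' y).rpow ((hasDerivAt_id' ρ).const_add 1) hα
    using 1
  set s := 1 / (1 + ρ)
  set α := gallagerInner P ρ y
  set S := ∑ x, P x y ^ s * log (P x y)
  have hsum : ∑ x, P x y ^ s * α ^ ρ * log (P x y ^ s / α) =
      α ^ ρ * s * S - α ^ ρ * log α * α := by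
    calc _ = ∑ x, (α ^ ρ * s * (P x y ^ s * log (P x y)) - α ^ ρ * log α * P x y ^ s) := by
          refine sum_congr rfl fun x _ => ?_
          rw [log_div (rpow_pos_of_pos (hP x y) s).ne' hα.ne', log_rpow (hP x y)]
          ring
      _ = _ := by rw [sum_sub_distrib, ← mul_sum, ← mul_sum]; rfl
  have hpow : α ^ (1 + ρ) = α * α ^ ρ := by rw [rpow_add hα, rpow_one]
  have hs : s ^ 2 * (1 + ρ) = s := by simp only [s]; field_simp
  rw [hsum, hpow, add_sub_cancel_left]
  linear_combination (α ^ ρ * S) * hs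

variable [Fintype B]

def gallagerSum (P : A → B → ℝ) (ρ : ℝ) : ℝ :=
  ∑ y, gallagerInner P ρ y ^ (1 + ρ)

def tiltedPMF (P : A → B → ℝ) (ρ : ℝ) (x : A) (y : B) : ℝ :=
  P x y ^ (1 / (1 + ρ)) * gallagerInner P ρ y ^ ρ / gallagerSum P ρ

def condEntropy (Q : A → B → ℝ) : ℝ :=
  -∑ x, ∑ y, Q x y * log (Q x y / ∑ x', Q x' y)

variable [Nonempty A]

theorem gallagerSum_pos [Nonempty B] (hP : ∀ x y, 0 < P x y) (ρ : ℝ) : 0 < gallagerSum P ρ :=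
  sum_pos (fun y _ => rpow_pos_of_pos (gallagerInner_pos hP ρ y) _) univ_nonempty

theorem hasDerivAt_gallagerSum (hP : ∀ x y, 0 < P x y) (hρ : -1 < ρ) :
    HasDerivAt (gallagerSum P)
      (-∑ y, ∑ x, P x y ^ (1 / (1 + ρ)) * gallagerInner P ρ y ^ ρ *
        log (P x y ^ (1 / (1 + ρ)) / gallagerInner P ρ y)) ρ := by
  rw [← sum_neg_distrib]
  exact HasDerivAt.fun_sum fun y _ => hasDerivAt_gallagerInner_rpow hP hρ y

theorem tiltedPMF_div_sum [Nonempty B] (hP : ∀ x y, 0 < P x y) (ρ : ℝ) (x : A) (y : B) :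
    tiltedPMF P ρ x y / ∑ x', tiltedPMF P ρ x' y =
      P x y ^ (1 / (1 + ρ)) / gallagerInner P ρ y := by
  have hα := gallagerInner_pos hP ρ y
  have hαρ := rpow_pos_of_pos hα ρ
  have hZ := gallagerSum_pos hP ρ
  simp only [tiltedPMF, ← sum_div, ← sum_mul]
  rw [show ∑ x', P x' y ^ (1 / (1 + ρ)) = gallagerInner P ρ y from rfl]
  field_simp

theorem condEntropy_tiltedPMF [Nonempty B] (hP : ∀ x y, 0 < P x y) (ρ : ℝ) :
    condEntropy (tiltedPMF P ρ) =
      -(∑ y, ∑ x, P x y ^ (1 / (1 + ρ)) * gallagerInner P ρ y ^ ρ *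
        log (P x y ^ (1 / (1 + ρ)) / gallagerInner P ρ y)) / gallagerSum P ρ := by
  simp only [condEntropy, tiltedPMF_div_sum hP, neg_div, sum_div]
  rw [sum_comm]
  simp only [tiltedPMF, div_mul_eq_mul_div]

theorem hasDerivAt_log_gallagerSum [Nonempty B] (hP : ∀ x y, 0 < P x y) (hρ : -1 < ρ) :
    HasDerivAt (fun t => log (gallagerSum P t)) (condEntropy (tiltedPMF P ρ)) ρ := by
  rw [condEntropy_tiltedPMF hP]
  exact (hasDerivAt_gallagerSum hP hρ).log (gallagerSum_pos hP ρ).ne'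

end

theorem source_exponent_attained_at_matching_rate_general
    {A B : Type*} [Fintype A] [Fintype B] [Nonempty A] [Nonempty B]
    (P : A → B → ℝ) (hpos : ∀ x y, 0 < P x y)
    (φ : ℝ → ℝ)
    (hφ : ∀ ρ : ℝ, φ ρ =
      Real.log (∑ y, (∑ x, P x y ^ (1 / (1 + ρ))) ^ (1 + ρ)))
    (Pb : ℝ → A → B → ℝ)
    (hPb : ∀ ρ x y, Pb ρ x y =
      P x y ^ (1 / (1 + ρ)) * (∑ x', P x' y ^ (1 / (1 + ρ))) ^ ρ /
        ∑ y', (∑ x', P x' y' ^ (1 / (1 + ρ))) ^ (1 + ρ))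
    (h : ℝ → ℝ)
    (hh : ∀ ρ : ℝ, h ρ =
      -∑ x, ∑ y, Pb ρ x y * Real.log (Pb ρ x y / ∑ x', Pb ρ x' y))
    (J : ℝ → ℝ)
    (hJ : ∀ R : ℝ, J R = sSup {v : ℝ | ∃ ρ ∈ Set.Icc (0 : ℝ) 1, v = ρ * R - φ ρ})
    (R : ℝ) (hR0 : h 0 < R) (hR1 : R < h 1) :
    ∃ ρ₀ ∈ Set.Ioo (0 : ℝ) 1, h ρ₀ = R ∧ J R = ρ₀ * R - φ ρ₀ := by
  have hφ_eq : φ = fun ρ => log (gallagerSum P ρ) := funext hφ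
  have hPb_eq : Pb = tiltedPMF P := funext fun ρ => funext fun x => funext (hPb ρ x)
  have hh_eq : h = fun ρ => condEntropy (tiltedPMF P ρ) := by
    funext ρ
    rw [hh, hPb_eq]
    rfl
  have hderiv : ∀ ρ ∈ Icc (0 : ℝ) 1, HasDerivAt (fun t => t * R - φ t) (R - h ρ) ρ := by
    intro ρ hρ
    rw [hφ_eq, hh_eq]
    exact (hasDerivAt_mul_const R).sub (hasDerivAt_log_gallagerSum hpos (by linarith [hρ.1]))
  obtain ⟨ρ₀, hρ₀, hmax, hR⟩ := exists_mem_Ioo_isMaxOn_hasDerivAt_eq_zero zero_lt_one hderiv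
    (sub_pos.2 hR0) (sub_neg.2 hR1)
  refine ⟨ρ₀, hρ₀, (sub_eq_zero.1 hR).symm, ?_⟩
  rw [hJ]
  refine IsLUB.csSup_eq ?_ ⟨_, ρ₀, Ioo_subset_Icc_self hρ₀, rfl⟩
  convert hmax.isLUB (Ioo_subset_Icc_self hρ₀) using 6
  exact eq_comm

theorem source_exponent_attained_at_matching_rate
    {A B : Type*} [Fintype A] [Fintype B] [Nonempty A] [Nonempty B]
    (P : A → B → ℝ) (hpos : ∀ x y, 0 < P x y)
    (hsum : ∑ x, ∑ y, P x y = 1)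
    (φ : ℝ → ℝ)
    (hφ : ∀ ρ : ℝ, φ ρ =
      Real.log (∑ y, (∑ x, P x y ^ (1 / (1 + ρ))) ^ (1 + ρ)))
    (Pb : ℝ → A → B → ℝ)
    (hPb : ∀ ρ x y, Pb ρ x y =
      P x y ^ (1 / (1 + ρ)) * (∑ x', P x' y ^ (1 / (1 + ρ))) ^ ρ /
        ∑ y', (∑ x', P x' y' ^ (1 / (1 + ρ))) ^ (1 + ρ))
    (h : ℝ → ℝ)
    (hh : ∀ ρ : ℝ, h ρ =
      -∑ x, ∑ y, Pb ρ x y * Real.log (Pb ρ x y / ∑ x', Pb ρ x' y))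
    (J : ℝ → ℝ)
    (hJ : ∀ R : ℝ, J R = sSup {v : ℝ | ∃ ρ ∈ Set.Icc (0 : ℝ) 1, v = ρ * R - φ ρ})
    (R : ℝ) (hR0 : h 0 < R) (hR1 : R < h 1) :
    ∃ ρ₀ ∈ Set.Ioo (0 : ℝ) 1, h ρ₀ = R ∧ J R = ρ₀ * R - φ ρ₀ :=
  source_exponent_attained_at_matching_rate_general P hpos φ hφ Pb hPb h hh J hJ R hR0 hR1
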